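/- Let U be a unitary on H with 1 + U Fredholm and W a closed finite-codimensional subspace with Ker(1+U) ∩ W = {0}. Write U = [[X,Y],[Z,T]] relative to H = W ⊕ W⊥. Then the operator 1 + X = P_W ∘ (1+U)|_W : W → W is invertible. In particular, if w ∈ W satisfies ⟨(1+U)w, v⟩ = 0 for all v ∈ W, then w = 0. -/

import Mathlib

open scoped InnerProductSpace

noncomputable section

variable (H : Type) [NormedAddCommGroup H] [InnerProductSpace ℂ H] [CompleteSpace H]

/-- A bounded operator `T` on `H` is Fredholm: finite-dimensional kernel,
finite-dimensional cokernel, and closed range. -/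
def IsFredholmOp (T : H →L[ℂ] H) : Prop :=
  FiniteDimensional ℂ ↥(LinearMap.ker (T : H →ₗ[ℂ] H)) ∧
  FiniteDimensional ℂ (H ⧸ LinearMap.range (T : H →ₗ[ℂ] H)) ∧
  IsClosed ((LinearMap.range (T : H →ₗ[ℂ] H) : Submodule ℂ H) : Set H)

/-!
For a unitary `U` one has `‖(1 + U) x‖² = 2 Re ⟪(1 + U) x, x⟫`, so the compression
`A = P_W (1 + U)|_W` satisfies `⟪A w, w⟫ = 0 → w ∈ Ker(1 + U) ∩ W = 0`. Hence `A` is injective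
and its range has trivial orthogonal complement; it remains to see that the range is closed.
Since `1 + U` has closed range, it is an open map onto it, so it maps the closed subspace
`W + Ker(1 + U)` (closed because the kernel is finite dimensional) onto a closed set `(1 + U) W`.
Finally `P_W M = (M + Wᗮ) ∩ W` is closed for closed `M`, because `Wᗮ` is finite dimensional.
-/

open Topology

section Unitary

variable {𝕜 E : Type*} [RCLike 𝕜] [NormedAddCommGroup E] [InnerProductSpace 𝕜 E] [CompleteSpace E]

theorem norm_one_add_unitary_apply_sq {U : E →L[𝕜] E} (hU : U ∈ unitary (E →L[𝕜] E)) (x : E) :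
    ‖(1 + U) x‖ ^ 2 = 2 * RCLike.re ⟪(1 + U) x, x⟫_𝕜 := by
  rw [add_apply, one_apply_eq_self, norm_add_sq (𝕜 := 𝕜),
    ContinuousLinearMap.norm_map_of_mem_unitary hU, inner_add_left, map_add, inner_self_eq_norm_sq,
    ← inner_conj_symm, RCLike.conj_re]
  ring

theorem one_add_unitary_apply_eq_zero_of_inner_self {U : E →L[𝕜] E}
    (hU : U ∈ unitary (E →L[𝕜] E)) {x : E} (hx : ⟪(1 + U) x, x⟫_𝕜 = 0) : (1 + U) x = 0 := by
  have h := norm_one_add_unitary_apply_sq hU x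
  rwa [hx, map_zero, mul_zero, sq_eq_zero_iff, norm_eq_zero] at h

end Unitary

namespace ContinuousLinearMap

variable {𝕜 E F : Type*} [NontriviallyNormedField 𝕜]
  [NormedAddCommGroup E] [NormedSpace 𝕜 E] [CompleteSpace E]
  [NormedAddCommGroup F] [NormedSpace 𝕜 F] [CompleteSpace F]

theorem isClosed_map_of_isClosed_range {T : E →L[𝕜] F} (hT : IsClosed (T.range : Set F))
    {S : Submodule 𝕜 E} (hS : IsClosed (S : Set E)) (hker : T.ker ≤ S) :
    IsClosed (S.map (T : E →ₗ[𝕜] F) : Set F) := by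
  have : CompleteSpace T.range := hT.completeSpace_coe
  have hquot : IsQuotientMap T.rangeRestrict :=
    (T.rangeRestrict.isOpenMap T.surjective_rangeRestrict).isQuotientMap
      T.rangeRestrict.continuous T.surjective_rangeRestrict
  have hsaturated : T.rangeRestrict ⁻¹' (T.rangeRestrict '' S) = S := by
    refine subset_antisymm ?_ (Set.subset_preimage_image _ _)
    rintro x ⟨s, hs, hsx⟩
    have hxs : x - s ∈ T.ker := by
      rw [LinearMap.mem_ker, coe_coe, map_sub, sub_eq_zero]
      exact (congrArg Subtype.val hsx).symm
    simpa using S.add_mem hs (hker hxs)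
  have hclosed : IsClosed (T.rangeRestrict '' S) := by
    rwa [← hquot.isClosed_preimage, hsaturated]
  have himage : (S.map (T : E →ₗ[𝕜] F) : Set F) = Subtype.val '' (T.rangeRestrict '' S) := by
    rw [Submodule.map_coe, Set.image_image]; rfl
  rw [himage]
  exact hT.isClosedEmbedding_subtypeVal.isClosedMap _ hclosed

theorem isClosed_map_of_finiteDimensional_ker [CompleteSpace 𝕜] {T : E →L[𝕜] F}
    (hT : IsClosed (T.range : Set F)) [FiniteDimensional 𝕜 T.ker] {S : Submodule 𝕜 E}
    (hS : IsClosed (S : Set E)) :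
    IsClosed (S.map (T : E →ₗ[𝕜] F) : Set F) := by
  have h := isClosed_map_of_isClosed_range hT (S.isClosed_sup_finiteDimensional T.ker hS)
    le_sup_right
  rwa [Submodule.map_sup, LinearMap.le_ker_iff_map.mp le_rfl, sup_bot_eq] at h

end ContinuousLinearMap

namespace Submodule

variable {𝕜 E : Type*} [RCLike 𝕜] [NormedAddCommGroup E] [InnerProductSpace 𝕜 E]
  {K : Submodule 𝕜 E} [K.HasOrthogonalProjection]

theorem isClosed_of_hasOrthogonalProjection : IsClosed (K : Set E) :=
  K.orthogonal_orthogonal ▸ Kᗮ.isClosed_orthogonal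

theorem mem_map_orthogonalProjectionOnto_iff {M : Submodule 𝕜 E} {x : K} :
    x ∈ M.map (K.orthogonalProjectionOnto : E →ₗ[𝕜] K) ↔ (x : E) ∈ M ⊔ Kᗮ := by
  constructor
  · rintro ⟨m, hm, rfl⟩
    rw [ContinuousLinearMap.coe_coe, ← sub_sub_cancel m (K.orthogonalProjectionOnto m : E)]
    exact sub_mem (mem_sup_left hm) (mem_sup_right (K.sub_starProjection_mem_orthogonal m))
  · intro hx
    obtain ⟨m, hm, z, hz, hmz⟩ := mem_sup.mp hx
    refine ⟨m, hm, ?_⟩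
    rw [ContinuousLinearMap.coe_coe, eq_sub_of_add_eq hmz, map_sub,
      orthogonalProjectionOnto_mem_subspace_eq_self, orthogonalProjectionOnto_eq_zero_iff.mpr hz,
      sub_zero]

theorem isClosed_map_orthogonalProjectionOnto [FiniteDimensional 𝕜 Kᗮ] {M : Submodule 𝕜 E}
    (hM : IsClosed (M : Set E)) :
    IsClosed (M.map (K.orthogonalProjectionOnto : E →ₗ[𝕜] K) : Set K) := by
  have h : (M.map (K.orthogonalProjectionOnto : E →ₗ[𝕜] K) : Set K) =
      Subtype.val ⁻¹' (M ⊔ Kᗮ : Submodule 𝕜 E) :=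
    Set.ext fun _ ↦ mem_map_orthogonalProjectionOnto_iff
  rw [h]
  exact (M.isClosed_sup_finiteDimensional Kᗮ hM).preimage continuous_subtype_val

end Submodule

namespace ContinuousLinearMap

variable {𝕜 E : Type*} [RCLike 𝕜] [NormedAddCommGroup E] [InnerProductSpace 𝕜 E] [CompleteSpace E]

theorem isUnit_of_isClosed_range_of_inner_map_self {A : E →L[𝕜] E}
    (hA : IsClosed (A.range : Set E)) (h : ∀ x, ⟪A x, x⟫_𝕜 = 0 → x = 0) : IsUnit A := by
  have : CompleteSpace A.range := hA.completeSpace_coe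
  refine isUnit_iff_bijective.mpr ⟨(injective_iff_map_eq_zero A).mpr fun x hx ↦ h x ?_, ?_⟩
  · rw [hx, inner_zero_left]
  · refine LinearMap.range_eq_top.mp (Submodule.orthogonal_eq_bot_iff.mp ?_)
    exact (Submodule.eq_bot_iff _).mpr fun x hx ↦
      h x (Submodule.inner_right_of_mem_orthogonal (LinearMap.mem_range_self _ x) hx)

end ContinuousLinearMap

theorem one_add_block_invertible (U : H →L[ℂ] H) (hU : U ∈ unitary (H →L[ℂ] H))
    (hFred : IsFredholmOp H (1 + U))
    (W : Submodule ℂ H) [W.HasOrthogonalProjection]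
    [FiniteDimensional ℂ ↥(Wᗮ)]
    (hclean : LinearMap.ker ((1 + U : H →L[ℂ] H) : H →ₗ[ℂ] H) ⊓ W = ⊥) :
    IsUnit (W.orthogonalProjectionOnto ∘L (1 + U) ∘L W.subtypeL) ∧
    ∀ w : ↥W, (∀ v : ↥W, ⟪(1 + U : H →L[ℂ] H) (w : H), (v : H)⟫_ℂ = 0) → w = 0 := by
  obtain ⟨hker, -, hrange⟩ := hFred
  have hW : IsClosed (W : Set H) := Submodule.isClosed_of_hasOrthogonalProjection
  have : CompleteSpace W := hW.completeSpace_coe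
  have hdefinite (w : W) (hw : ⟪(1 + U) (w : H), (w : H)⟫_ℂ = 0) : w = 0 := by
    have hw' : (w : H) ∈ LinearMap.ker ((1 + U : H →L[ℂ] H) : H →ₗ[ℂ] H) ⊓ W :=
      ⟨one_add_unitary_apply_eq_zero_of_inner_self hU hw, w.2⟩
    rw [hclean, Submodule.mem_bot, Submodule.coe_eq_zero] at hw'
    exact hw'
  refine ⟨ContinuousLinearMap.isUnit_of_isClosed_range_of_inner_map_self ?_ fun w hw ↦ ?_,
    fun w hw ↦ hdefinite w (hw w)⟩
  · rw [ContinuousLinearMap.toLinearMap_comp, ContinuousLinearMap.toLinearMap_comp,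
      LinearMap.range_comp, LinearMap.range_comp,
      show (W.subtypeL : W →ₗ[ℂ] H).range = W from W.range_subtype]
    exact Submodule.isClosed_map_orthogonalProjectionOnto
      (ContinuousLinearMap.isClosed_map_of_finiteDimensional_ker hrange hW)
  · rw [ContinuousLinearMap.comp_apply, ContinuousLinearMap.comp_apply,
      W.inner_orthogonalProjectionOnto_eq_of_mem_right] at hw
    exact hdefinite w hw
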